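/- For every ε > 0 and every rational a/b ∈ (0,1), there exist an integer k (a multiple of b) and a real number α ∈ (a/b - ε, a/b + ε) ∩ (0,1) such that α is a root of the polynomial b_E(y) = k·P(B_{k,y} ∈ E_{a,b}) - ky, where E_{a,b} = {i ≤ k : i mod b ∈ {0,...,a-1}}. -/

import Mathlib

/-!
Averaging over the `b`-th roots of unity `ζ ^ j` filters residues mod `b`:
`b · P(B_{k,y} mod b < a) = ∑_{j<b} (∑_{r<a} ζ^(-jr)) (y ζ^j + (1 - y))^k`.
The `j = 0` term is `a`; for `j ≠ 0` the base `y ζ^j + (1 - y)` is a proper convex combination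
of two distinct points of the unit circle, so it lies strictly inside the disc and its `k`-th
power tends to `0`. Hence `P(B_{k,y} mod b < a) → a/b` for every `y ∈ (0,1)`. Comparing at
`y = a/b ± δ` and applying the intermediate value theorem to `P(B_{k,y} mod b < a) - y` gives a
fixed point within `δ` of `a/b` for all large `k`, in particular for a multiple of `b`.
-/

open Finset Filter Topology

/-- `P(B_{k,y} ∈ E)` for a binomial random variable `B_{k,y}` with `k` trials and parameter `y`. -/
noncomputable def binomialMass (k : ℕ) (E : ℕ → Prop) [DecidablePred E] (y : ℝ) : ℝ :=
  ∑ i ∈ (range (k + 1)).filter E, (k.choose i : ℝ) * y ^ i * (1 - y) ^ (k - i)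

namespace IsPrimitiveRoot

variable {K : Type*} [Field K] {ζ : K} {b : ℕ}

theorem sum_zpow_mul_eq_ite (hζ : IsPrimitiveRoot ζ b) (m : ℤ) :
    ∑ j ∈ range b, ζ ^ ((j : ℤ) * m) = if (b : ℤ) ∣ m then (b : K) else 0 := by
  have hpow (j : ℕ) : ζ ^ ((j : ℤ) * m) = (ζ ^ m) ^ j := by
    rw [mul_comm, zpow_mul, zpow_natCast]
  simp only [hpow]
  split_ifs with hdvd
  · simp [(hζ.zpow_eq_one_iff_dvd m).2 hdvd]
  · have hne : ζ ^ m ≠ 1 := mt (hζ.zpow_eq_one_iff_dvd m).1 hdvd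
    have hb : (ζ ^ m) ^ b = 1 := by
      rw [← zpow_natCast, ← zpow_mul, mul_comm, zpow_mul, zpow_natCast, hζ.pow_eq_one, one_zpow]
    rw [geom_sum_eq hne, hb, sub_self, zero_div]

theorem mul_sum_filter_mod_lt (hζ : IsPrimitiveRoot ζ b) (hb : b ≠ 0) {a : ℕ} (hab : a ≤ b)
    (s : Finset ℕ) (c : ℕ → K) :
    b * ∑ i ∈ s with i % b < a, c i
      = ∑ j ∈ range b, (∑ r ∈ range a, ζ ^ (-((j : ℤ) * r))) * ∑ i ∈ s, c i * (ζ ^ j) ^ i := by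
  have hshift (j r i : ℕ) :
      ζ ^ (-((j : ℤ) * r)) * (c i * (ζ ^ j) ^ i) = c i * ζ ^ ((j : ℤ) * (i - r)) := by
    rw [mul_sub, sub_eq_neg_add, zpow_add₀ (hζ.ne_zero hb), ← pow_mul, ← zpow_natCast]
    push_cast
    ring
  have hresidue (i : ℕ) :
      ∑ r ∈ range a, (if (b : ℤ) ∣ (i - r : ℤ) then (b : K) else 0)
        = if i % b < a then (b : K) else 0 := by
    have hdvd (r : ℕ) (hr : r ∈ range a) : (b : ℤ) ∣ (i - r : ℤ) ↔ i % b = r := by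
      rw [Int.dvd_iff_emod_eq_zero, ← Int.emod_eq_emod_iff_emod_sub_eq_zero, ← Int.natCast_mod,
        ← Int.natCast_mod, Nat.mod_eq_of_lt ((mem_range.1 hr).trans_le hab), Nat.cast_inj]
    rw [sum_congr rfl fun r hr => if_congr (hdvd r hr) rfl rfl, sum_ite_eq]
    simp only [mem_range]
  symm
  calc ∑ j ∈ range b, (∑ r ∈ range a, ζ ^ (-((j : ℤ) * r))) * ∑ i ∈ s, c i * (ζ ^ j) ^ i
      = ∑ i ∈ s, c i * ∑ r ∈ range a, ∑ j ∈ range b, ζ ^ ((j : ℤ) * (i - r)) := by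
        simp_rw [sum_mul, mul_sum, hshift]
        rw [sum_comm, sum_congr rfl fun r _ => sum_comm, sum_comm]
    _ = b * ∑ i ∈ s with i % b < a, c i := by
        simp_rw [hζ.sum_zpow_mul_eq_ite, hresidue, sum_filter, mul_sum]
        refine sum_congr rfl fun i _ => ?_
        split_ifs <;> simp [mul_comm]

end IsPrimitiveRoot

theorem IsPrimitiveRoot.mul_binomialMass_mod_lt {ζ : ℂ} {a b : ℕ} (hζ : IsPrimitiveRoot ζ b)
    (hb : b ≠ 0) (hab : a ≤ b) (k : ℕ) (y : ℝ) :
    (b : ℂ) * binomialMass k (· % b < a) y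
      = ∑ j ∈ range b, (∑ r ∈ range a, ζ ^ (-((j : ℤ) * r))) * (y * ζ ^ j + (1 - y)) ^ k := by
  rw [binomialMass, Complex.ofReal_sum, hζ.mul_sum_filter_mod_lt hb hab]
  refine sum_congr rfl fun j _ => ?_
  rw [add_pow]
  congr 1
  refine sum_congr rfl fun i _ => ?_
  push_cast
  ring

theorem tendsto_binomialMass_mod_lt {a b : ℕ} (hb : b ≠ 0) (hab : a ≤ b) {y : ℝ}
    (hy : y ∈ Set.Ioo 0 1) :
    Tendsto (fun k => binomialMass k (· % b < a) y) atTop (𝓝 (a / b)) := by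
  obtain ⟨ζ, hζ⟩ : ∃ ζ : ℂ, IsPrimitiveRoot ζ b := ⟨_, Complex.isPrimitiveRoot_exp b hb⟩
  set w : ℕ → ℂ := fun j => ∑ r ∈ range a, ζ ^ (-((j : ℤ) * r))
  set z : ℕ → ℂ := fun j => y * ζ ^ j + (1 - y)
  have hdecomp (k : ℕ) :
      ((b * binomialMass k (· % b < a) y - a : ℝ) : ℂ) = ∑ j ∈ (range b).erase 0, w j * z j ^ k := by
    push_cast
    rw [hζ.mul_binomialMass_mod_lt hb hab, ← add_sum_erase _ _ (mem_range.2 (Nat.pos_of_ne_zero hb))]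
    simp [w, z]
  have hz (j : ℕ) (hj : j ∈ (range b).erase 0) : ‖z j‖ < 1 := by
    obtain ⟨hj0, hjb⟩ := mem_erase.1 hj
    have hnorm : ‖ζ ^ j‖ ≤ 1 := by rw [norm_pow, hζ.norm'_eq_one hb, one_pow]
    simpa [z, Complex.real_smul] using norm_combo_lt_of_ne hnorm norm_one.le
      (hζ.pow_ne_one_of_pos_of_lt hj0 (mem_range.1 hjb)) hy.1 (sub_pos.2 hy.2)
      (add_sub_cancel y 1)
  have herr : Tendsto (fun k => b * binomialMass k (· % b < a) y - a) atTop (𝓝 0) := by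
    rw [← tendsto_ofReal_iff]
    simpa only [hdecomp, Complex.ofReal_zero, mul_zero, sum_const_zero] using tendsto_finsetSum _
      fun j hj => (tendsto_pow_atTop_nhds_zero_of_norm_lt_one (hz j hj)).const_mul (w j)
  have hb' : (b : ℝ) ≠ 0 := Nat.cast_ne_zero.2 hb
  simpa [hb'] using (herr.add_const (a : ℝ)).div_const (b : ℝ)

theorem eventually_exists_fixedPoint_of_tendsto {F : ℕ → ℝ → ℝ} {q δ : ℝ} (hδ : 0 < δ)
    (hF : ∀ k, ContinuousOn (F k) (Set.Icc (q - δ) (q + δ)))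
    (hlo : Tendsto (fun k => F k (q - δ)) atTop (𝓝 q))
    (hhi : Tendsto (fun k => F k (q + δ)) atTop (𝓝 q)) :
    ∀ᶠ k in atTop, ∃ α ∈ Set.Ioo (q - δ) (q + δ), F k α = α := by
  filter_upwards [hlo.eventually (eventually_gt_nhds (sub_lt_self q hδ)),
    hhi.eventually (eventually_lt_nhds (lt_add_of_pos_right q hδ))] with k hk_lo hk_hi
  obtain ⟨α, hα, hfix⟩ := intermediate_value_Ioo' (by linarith : q - δ ≤ q + δ)
    ((hF k).sub continuousOn_id) ⟨sub_neg.2 hk_hi, sub_pos.2 hk_lo⟩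
  exact ⟨α, hα, sub_eq_zero.1 hfix⟩

theorem stmt_16 (ε : ℝ) (hε : 0 < ε) (a b : ℕ) (ha : 0 < a) (hab : a < b) :
    ∃ k : ℕ, 0 < k ∧ b ∣ k ∧
      ∃ α : ℝ, α ∈ Set.Ioo (0:ℝ) 1 ∧ α ∈ Set.Ioo ((a:ℝ)/b - ε) ((a:ℝ)/b + ε) ∧
        (k:ℝ) * (∑ i ∈ (Finset.range (k+1)).filter (fun i => i % b < a),
            (k.choose i : ℝ) * α^i * (1-α)^(k-i)) - k*α = 0 := by
  have hb : 0 < b := ha.trans hab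
  set q : ℝ := a / b
  have hq : q ∈ Set.Ioo 0 1 := ⟨by positivity, (div_lt_one (by positivity)).2 (by exact_mod_cast hab)⟩
  obtain ⟨δ, hδ, hball⟩ := Metric.nhds_basis_closedBall.mem_iff.1 <| inter_mem
    (Ioo_mem_nhds hq.1 hq.2) (Ioo_mem_nhds (sub_lt_self q hε) (lt_add_of_pos_right q hε))
  rw [Real.closedBall_eq_Icc] at hball
  have hcont (k : ℕ) : ContinuousOn (binomialMass k (· % b < a)) (Set.Icc (q - δ) (q + δ)) := by
    unfold binomialMass
    fun_prop
  obtain ⟨K, hK⟩ := eventually_atTop.1 <| eventually_exists_fixedPoint_of_tendsto hδ hcont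
    (tendsto_binomialMass_mod_lt hb.ne' hab.le (hball ⟨le_rfl, by linarith⟩).1)
    (tendsto_binomialMass_mod_lt hb.ne' hab.le (hball ⟨by linarith, le_rfl⟩).1)
  obtain ⟨α, hα, hfix⟩ := hK (b * (K + 1)) (by nlinarith)
  obtain ⟨hα₀₁, hαε⟩ := hball (Set.Ioo_subset_Icc_self hα)
  refine ⟨b * (K + 1), by positivity, dvd_mul_right _ _, α, hα₀₁, hαε, ?_⟩
  change _ * binomialMass _ (· % b < a) α - _ = 0
  rw [hfix, sub_self]
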